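/- For every integer k ≥ 166 and every α ∈ (0.9, 1]: φ(α) ≥ 2^{k-1}·ln 2 − (ln 2)/2 − 1/2 − 45·k^3·2^{-k}, where φ(α) = (ln 2 − h(α)) · (2^{k-1} + (2^{k-1} − 2)·k·(1−α) − 1/2) and h(α) = −α·ln α − (1−α)·ln(1−α) is the entropy function (with h(1) = 0). -/

import Mathlib

/-!
Write `β = 1 - α` and `N = 2^(k-1)`. Since `-α log α ≤ 1 - α`, the entropy is at most
`g(β) = β (1 - log β)`, so `φ(α) ≥ (log 2 - g(β)) (N + (N - 2) k β - 1/2)`, and it suffices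
to compare the right-hand side with its value `log 2 · (N - 1/2)` at `β = 0`.
If `k² β > 1`, then `-log β < 2 log k` makes `g(β) = O(k β)`, which is beaten by the term
`(log 2 - g(β)) (N - 2) k β`. If `k² β ≤ 1`, put `u = 2^k β`: the `k log 2` in
`-log β = k log 2 - log u` cancels against that same term, leaving a loss
`β (1 - log u) (N - 1/2) + O(k² β² N)`, which is negative when `u > 16` and at most
`1/2 + O(k² 2^(-k))` when `u ≤ 16`, because `u (1 - log u) ≤ 1`.
-/

/-- The entropy function `h(α) = -α ln α - (1-α) ln(1-α)` (note `Real.log 0 = 0`,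
so the convention `0 · ln 0 = 0` holds automatically). -/
noncomputable def entH (α : ℝ) : ℝ :=
  -α * Real.log α - (1 - α) * Real.log (1 - α)

/-- `φ(α) = (ln 2 - h(α)) (2^(k-1) + (2^(k-1) - 2) k (1-α) - 1/2)`. -/
noncomputable def phiAM (k : ℕ) (α : ℝ) : ℝ :=
  (Real.log 2 - entH α) * (2 ^ (k - 1) + ((2 : ℝ) ^ (k - 1) - 2) * k * (1 - α) - 1 / 2)

open Real

lemma mul_one_sub_log_le_one {x : ℝ} (hx : 0 ≤ x) : x * (1 - log x) ≤ 1 := by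
  nlinarith [self_sub_one_le_mul_log hx]

lemma mul_mul_one_sub_log_le {c x : ℝ} (hc : 0 < c) (hx : 0 < x) :
    c * (x * (1 - log x)) ≤ 1 + c * x * log c := by
  have := mul_one_sub_log_le_one (mul_pos hc hx).le
  rw [log_mul hc.ne' hx.ne'] at this
  linarith

lemma entH_le_mul_one_sub_log {α : ℝ} (hα : 0 < α) :
    entH α ≤ (1 - α) * (1 - log (1 - α)) := by
  unfold entH
  nlinarith [self_sub_one_le_mul_log hα.le]

lemma monotoneOn_mul_one_sub_log : MonotoneOn (fun x ↦ x * (1 - log x)) (Set.Icc 0 1) := by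
  rintro x ⟨hx0, -⟩ y ⟨-, hy1⟩ hxy
  have hlogy : log y ≤ 0 := log_nonpos (hx0.trans hxy) hy1
  rcases hx0.eq_or_lt with rfl | hx
  · simp only [zero_mul]
    nlinarith [hx0.trans hxy]
  · have hy := hx.trans_le hxy
    have hquot : x * (log y - log x) ≤ y - x := by
      have := mul_le_mul_of_nonneg_left (log_le_sub_one_of_pos (div_pos hy hx)) hx.le
      rwa [log_div hy.ne' hx.ne', mul_sub_one, mul_div_cancel₀ _ hx.ne'] at this
    show x * (1 - log x) ≤ y * (1 - log y)
    nlinarith [mul_nonneg (sub_nonneg.2 hxy) (neg_nonneg.2 hlogy)]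

lemma four_mul_le_two_pow {k : ℕ} (hk : 4 ≤ k) : 4 * k ≤ 2 ^ k := by
  induction k, hk using Nat.le_induction with
  | base => norm_num
  | succ n hn ih => rw [pow_succ]; omega

/-- `φ` with the entropy `h(1 - β)` replaced by its upper bound `β (1 - log β)`;
the parameter `N` stands for `2 ^ (k - 1)`. -/
noncomputable def phiLower (k : ℕ) (N β : ℝ) : ℝ :=
  (log 2 - β * (1 - log β)) * (N + (N - 2) * k * β - 1 / 2)

section phiLower

variable {k : ℕ} {N β : ℝ}

lemma phiLower_le_phiAM (hk : 2 ≤ k) {α : ℝ} (hα0 : 0 < α) (hα1 : α ≤ 1) :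
    phiLower k (2 ^ (k - 1)) (1 - α) ≤ phiAM k α := by
  have hN : (2 : ℝ) ≤ 2 ^ (k - 1) := le_self_pow₀ one_le_two (by omega)
  have hP : 0 ≤ ((2 : ℝ) ^ (k - 1) - 2) * k * (1 - α) :=
    mul_nonneg (mul_nonneg (by linarith) k.cast_nonneg) (sub_nonneg.2 hα1)
  unfold phiAM phiLower
  gcongr
  · linarith
  · exact entH_le_mul_one_sub_log hα0

lemma phiLower_zero : phiLower k N 0 = log 2 * (N - 1 / 2) := by
  simp [phiLower]

lemma phiLower_eq (hβ : 0 < β) :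
    phiLower k N β = log 2 * (N - 1 / 2) - (β * (1 - log (2 ^ k * β)) * (N - 1 / 2)
      + 3 / 2 * k * log 2 * β + k * β * (β * (1 - log β)) * (N - 2)) := by
  rw [phiLower, log_mul (by positivity) hβ.ne', log_pow]
  ring

lemma phiLower_ge_of_two_pow_mul_le (hk : 4 ≤ k) (hN : 2 * N = 2 ^ k) (hβ : 0 < β)
    (hu : 2 ^ k * β ≤ 16) :
    log 2 * (N - 1 / 2) - 1 / 2 - 45 * k ^ 3 / 2 ^ k ≤ phiLower k N β := by
  obtain ⟨M, hM⟩ : ∃ M : ℝ, M = 2 ^ k := ⟨_, rfl⟩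
  obtain ⟨u, hu_def⟩ : ∃ u : ℝ, u = M * β := ⟨_, rfl⟩
  rw [← hM] at hN hu ⊢
  rw [← hu_def] at hu
  have hM16 : 16 ≤ M := by
    rw [hM, show (16 : ℝ) = 2 ^ 4 by norm_num]
    exact pow_le_pow_right₀ one_le_two hk
  have hK : (4 : ℝ) ≤ k := by exact_mod_cast hk
  have hu0 : 0 < u := hu_def ▸ mul_pos (by positivity) hβ
  have hlog2 : log 2 < 0.7 := by linarith [log_two_lt_d9]
  have hlogM : log M = k * log 2 := by rw [hM, log_pow]
  have hg : M * (β * (1 - log β)) ≤ 1 + 16 * (k * log 2) := by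
    have := mul_mul_one_sub_log_le (c := M) (by positivity) hβ
    rw [← hu_def, hlogM] at this
    have : 0 ≤ k * log 2 := by have := log_pos one_lt_two; positivity
    nlinarith
  have hT1 : u * (1 - log u) * (M - 1) ≤ M := by
    nlinarith [mul_one_sub_log_le_one hu0.le]
  have hT2 : 3 / 2 * k * log 2 * u ≤ 24 * k * log 2 := by
    have : 0 ≤ 3 / 2 * k * log 2 := by have := log_pos one_lt_two; positivity
    nlinarith
  have hT3 : k * (M * (β * (1 - log β))) * (β * (N - 2)) ≤ k * (1 + 16 * (k * log 2)) * 8 := by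
    have hβ1 : β ≤ 1 := by nlinarith
    have hg0 : 0 ≤ β * (1 - log β) := mul_nonneg hβ.le (by linarith [log_nonpos hβ.le hβ1])
    have hβN0 : 0 ≤ β * (N - 2) := mul_nonneg hβ.le (by linarith)
    gcongr
    nlinarith
  have hpoly : 24 * k * log 2 + k * (1 + 16 * (k * log 2)) * 8 ≤ 45 * (k : ℝ) ^ 3 := by
    nlinarith [mul_le_mul_of_nonneg_left hlog2.le (sq_nonneg (k : ℝ)),
      mul_le_mul_of_nonneg_left hlog2.le k.cast_nonneg]
  have hsum : β * (1 - log u) * (N - 1 / 2) + 3 / 2 * k * log 2 * β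
      + k * β * (β * (1 - log β)) * (N - 2) ≤ (M / 2 + 45 * k ^ 3) / M := by
    have hN' : N = M / 2 := by linarith
    have : (β * (1 - log u) * (N - 1 / 2) + 3 / 2 * k * log 2 * β
        + k * β * (β * (1 - log β)) * (N - 2)) * M = u * (1 - log u) * (M - 1) / 2
          + 3 / 2 * k * log 2 * u + k * (M * (β * (1 - log β))) * (β * (N - 2)) := by
      rw [hu_def, hN']; ring
    rw [le_div_iff₀ (by positivity)]
    linarith
  have hsplit : (M / 2 + 45 * k ^ 3) / M = 1 / 2 + 45 * k ^ 3 / M := by field_simp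
  rw [phiLower_eq hβ, ← hM, ← hu_def]
  linarith

lemma phiLower_ge_of_lt_two_pow_mul (hk : 1 ≤ k) (hN : 2 * k ≤ N) (hβ : 0 < β)
    (hu : 16 < 2 ^ k * β) (hkβ : k ^ 2 * β ≤ 1) : log 2 * (N - 1 / 2) ≤ phiLower k N β := by
  have hK : (1 : ℝ) ≤ k := by exact_mod_cast hk
  have hlog2 : 0.69 < log 2 := by linarith [log_two_gt_d9]
  have hlogu : 4 * log 2 ≤ log (2 ^ k * β) := by
    calc 4 * log 2 = log 16 := by rw [show (16 : ℝ) = 2 ^ 4 by norm_num, log_pow]; norm_num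
      _ ≤ log (2 ^ k * β) := log_le_log (by norm_num) hu.le
  have hlogβ : log β = log (2 ^ k * β) - k * log 2 := by
    rw [log_mul (by positivity) hβ.ne', log_pow]; ring
  have hβ1 : β ≤ 1 := by nlinarith [one_le_pow₀ (n := 2) hK]
  have hlogβ0 : 0 ≤ 1 - log β := by linarith [log_nonpos hβ.le hβ1]
  have hkg : k * (β * (1 - log β)) ≤ log 2 := by
    have : k * (β * (1 - log β)) ≤ k * (β * (k * log 2)) := by
      gcongr; linarith
    nlinarith
  have hβN : 0 ≤ β * (N - 2) := mul_nonneg hβ.le (by linarith)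
  have hT3 : k * β * (β * (1 - log β)) * (N - 2) ≤ log 2 * (β * (N - 2)) := by
    have := mul_le_mul_of_nonneg_right hkg hβN
    linarith
  have hT1 : β * (1 - log (2 ^ k * β)) * (N - 1 / 2) ≤ β * (1 - 4 * log 2) * (N - 1 / 2) := by
    gcongr
    linarith
  have hbracket : (1 - 3 * log 2) * N - 1 / 2 + 3 / 2 * k * log 2 ≤ 0 := by nlinarith
  have := mul_nonpos_of_nonneg_of_nonpos hβ.le hbracket
  rw [phiLower_eq hβ]
  linarith

lemma phiLower_ge_of_one_lt_sq_mul (hk : 40 ≤ k) (hN : 2 * k ≤ N) (hkβ : 1 < k ^ 2 * β)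
    (hβ : β ≤ 1 / 8) : log 2 * (N - 1 / 2) ≤ phiLower k N β := by
  have hK : (40 : ℝ) ≤ k := by exact_mod_cast hk
  have hβ0 : 0 < β := by nlinarith
  have hlog2 : 0.69 < log 2 := by linarith [log_two_gt_d9]
  have hg : β * (1 - log β) ≤ (1 + 3 * log 2) / 8 := by
    have := monotoneOn_mul_one_sub_log ⟨hβ0.le, by linarith⟩ ⟨by norm_num, by norm_num⟩ hβ
    have h8 : log (1 / 8 : ℝ) = - (3 * log 2) := by
      rw [one_div, log_inv, show (8 : ℝ) = 2 ^ 3 by norm_num, log_pow]; norm_num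
    simp only [h8] at this
    linarith
  have hlogk : log k ≤ k / 16 - 1 + 4 * log 2 := by
    have := log_le_sub_one_of_pos (show (0 : ℝ) < k / 16 by positivity)
    rw [log_div (by positivity) (by norm_num), show (16 : ℝ) = 2 ^ 4 by norm_num, log_pow] at this
    push_cast at this
    linarith
  have hlogβ : - log β < 2 * log k := by
    have := log_pos hkβ
    rw [log_mul (by positivity) hβ0.ne', log_pow] at this
    push_cast at this
    linarith
  have hg' : β * (1 - log β) ≤ β * (k / 8 - 1 + 8 * log 2) := by
    gcongr
    linarith
  have hlog2' : log 2 < 0.7 := by linarith [log_two_lt_d9]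
  have hbracket : (k / 8 - 1 + 8 * log 2) * (N - 1 / 2) ≤ 3 / 10 * k * (N - 2) := by nlinarith
  have hT1 : β * (1 - log β) * (N - 1 / 2) ≤ β * (3 / 10 * k * (N - 2)) := by
    have := mul_le_mul_of_nonneg_left hbracket hβ0.le
    nlinarith
  have hP : 0 ≤ (N - 2) * k * β := mul_nonneg (mul_nonneg (by linarith) k.cast_nonneg) hβ0.le
  have hT2 : 3 / 10 * ((N - 2) * k * β) ≤ (log 2 - β * (1 - log β)) * ((N - 2) * k * β) :=
    mul_le_mul_of_nonneg_right (by linarith) hP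
  unfold phiLower
  linarith

lemma phiLower_ge (hk : 40 ≤ k) (hN : 2 * N = 2 ^ k) (hβ0 : 0 ≤ β) (hβ : β ≤ 1 / 8) :
    log 2 * (N - 1 / 2) - 1 / 2 - 45 * k ^ 3 / 2 ^ k ≤ phiLower k N β := by
  have hε : 0 ≤ 1 / 2 + 45 * (k : ℝ) ^ 3 / 2 ^ k := by positivity
  have hkN : 2 * (k : ℝ) ≤ N := by
    have : ((4 * k : ℕ) : ℝ) ≤ ((2 ^ k : ℕ) : ℝ) := by
      exact_mod_cast four_mul_le_two_pow (by omega)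
    push_cast at this
    linarith
  rcases hβ0.eq_or_lt with rfl | hβ0
  · rw [phiLower_zero]
    linarith
  rcases lt_or_ge 1 (k ^ 2 * β) with hkβ | hkβ
  · linarith [phiLower_ge_of_one_lt_sq_mul hk hkN hkβ hβ]
  rcases le_or_gt (2 ^ k * β) 16 with hu | hu
  · exact phiLower_ge_of_two_pow_mul_le (by omega) hN hβ0 hu
  · linarith [phiLower_ge_of_lt_two_pow_mul (by omega) hkN hβ0 hu hkβ]

end phiLower

/-- For every `k ≥ 166` and every `α ∈ (0.9, 1]`:
`φ(α) ≥ 2^(k-1) ln 2 - (ln 2)/2 - 1/2 - 45 k³ 2^(-k)`. -/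
theorem phiAM_min_bound (k : ℕ) (hk : 166 ≤ k) (α : ℝ) (hα : α ∈ Set.Ioc (0.9 : ℝ) 1) :
    phiAM k α ≥ 2 ^ (k - 1) * Real.log 2 - Real.log 2 / 2 - 1 / 2
        - 45 * (k : ℝ) ^ 3 * (2 : ℝ) ^ (-(k : ℤ)) := by
  obtain ⟨hα0, hα1⟩ := hα
  have hN : 2 * (2 : ℝ) ^ (k - 1) = 2 ^ k := by
    rw [← pow_succ']
    congr 1
    omega
  have hlower := phiLower_ge (by omega) hN (sub_nonneg.2 hα1) (by linarith : 1 - α ≤ 1 / 8)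
  have hφ := phiLower_le_phiAM (k := k) (by omega) (by linarith) hα1
  rw [zpow_neg, zpow_natCast, ← div_eq_mul_inv]
  linarith
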